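/- Let X be a Banach space, let T = {T(t,s) : t, s > a₀} be an invertible evolution family on X, let h : (a₀,∞) → (0,∞) be a growth rate, and let a₀* > a₀. If T admits an h-dichotomy on [a₀*,∞), then T is h-expansive on [a₀*,∞); in fact, if P(t), D, λ are the projections and constants of the h-dichotomy, then ‖v‖ ≤ D( (h(t)/h(a))^{−λ} ‖T(a,t)v‖ + (h(b)/h(t))^{−λ} ‖T(b,t)v‖ ) for every v ∈ X and all a ≤ t ≤ b with [a,b] ⊂ [a₀*,∞). -/

import Mathlib

/-!
Split `v = P t v + (v - P t v)`. Transporting to time `a ≤ t`, the stable part is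
`P t v = T t a (P a (T a t v))`, so the stable bound of the dichotomy controls it by
`‖T a t v‖`; transporting to time `b ≥ t`, the unstable part is
`v - P t v = T t b ((Id - P b) (T b t v))`, controlled by `‖T b t v‖` through the unstable
bound. The triangle inequality gives the estimate with constants `D, lam`.
-/

open Set Real

noncomputable section

variable {X : Type*} [NormedAddCommGroup X] [NormedSpace ℝ X] [CompleteSpace X]

/-- An invertible evolution family on `X` with parameter `a₀ ∈ ℝ ∪ {-∞}` (modelled as
`EReal`), viewed as a two-parameter family `T t s` for all `t, s > a₀` (for `t < s`,
`T t s` is the inverse of `T s t`): `T t t = Id` for `t > a₀`; the two-sided cocycle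
identity `T t s ∘ T s r = T t r` holds for all `t, s, r > a₀`; and for every `s > a₀`
and `v ∈ X`, the map `t ↦ T t s v` is continuous on `[s, ∞)`. -/
def IsInvertibleEvolutionFamily (a₀ : EReal) (T : ℝ → ℝ → X →L[ℝ] X) : Prop :=
  (∀ t : ℝ, a₀ < (t : EReal) → T t t = ContinuousLinearMap.id ℝ X) ∧
  (∀ t s r : ℝ, a₀ < (t : EReal) → a₀ < (s : EReal) → a₀ < (r : EReal) →
    (T t s).comp (T s r) = T t r) ∧
  (∀ s : ℝ, a₀ < (s : EReal) → ∀ v : X, ContinuousOn (fun t => T t s v) (Set.Ici s))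

/-- A growth rate: a bijective increasing map from `(a₀, ∞)` onto `(0, ∞)`. -/
def IsGrowthRate (a₀ : EReal) (h : ℝ → ℝ) : Prop :=
  StrictMonoOn h {t : ℝ | a₀ < (t : EReal)} ∧
  Set.BijOn h {t : ℝ | a₀ < (t : EReal)} (Set.Ioi (0 : ℝ))

/-- The family of projections `P` with constants `D, lam` witnesses an `h`-dichotomy of
the invertible evolution family `T` on `J`: the `P t` are projections commuting with the
evolution family, `T t s` restricted to `Ker P s` is a bijection onto `Ker P t` for
`t ≥ s` in `J`, `‖T t s ∘ P s‖ ≤ D (h t / h s)^(-lam)` for `t ≥ s` in `J`, and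
`‖T t s ∘ (Id - P s)‖ ≤ D (h s / h t)^(-lam)` for `t ≤ s` in `J` (for `t ≤ s`, `T t s`
is the inverse of `T s t`, which on `Ker P s` agrees with the inverse of
`T s t |_{Ker P t}`). -/
def HDichotomyProjWith (h : ℝ → ℝ) (T : ℝ → ℝ → X →L[ℝ] X) (J : Set ℝ)
    (P : ℝ → X →L[ℝ] X) (D lam : ℝ) : Prop :=
  (∀ t ∈ J, (P t).comp (P t) = P t) ∧
  (∀ t ∈ J, ∀ s ∈ J, s ≤ t → (P t).comp (T t s) = (T t s).comp (P s)) ∧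
  (∀ t ∈ J, ∀ s ∈ J, s ≤ t →
    Set.BijOn (T t s) (LinearMap.ker (P s : X →ₗ[ℝ] X) : Set X)
      (LinearMap.ker (P t : X →ₗ[ℝ] X) : Set X)) ∧
  (∀ t ∈ J, ∀ s ∈ J, s ≤ t → ‖(T t s).comp (P s)‖ ≤ D * (h t / h s) ^ (-lam)) ∧
  (∀ t ∈ J, ∀ s ∈ J, t ≤ s →
    ‖(T t s).comp (ContinuousLinearMap.id ℝ X - P s)‖ ≤ D * (h s / h t) ^ (-lam))

/-- `T` admits an `h`-dichotomy on `J`. -/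
def HDichotomyOn (h : ℝ → ℝ) (T : ℝ → ℝ → X →L[ℝ] X) (J : Set ℝ) : Prop :=
  ∃ (P : ℝ → X →L[ℝ] X) (D lam : ℝ), 0 < D ∧ 0 < lam ∧ HDichotomyProjWith h T J P D lam

/-- An invertible evolution family `T` is `h`-expansive on `J`: there are `L, β > 0` with
`‖v‖ ≤ L ((h t / h a)^(-β) ‖T a t v‖ + (h b / h t)^(-β) ‖T b t v‖)` for every `v ∈ X`
and all `a ≤ t ≤ b` with `[a, b] ⊆ J`. -/
def HExpansiveOn (h : ℝ → ℝ) (T : ℝ → ℝ → X →L[ℝ] X) (J : Set ℝ) : Prop :=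
  ∃ L : ℝ, 0 < L ∧ ∃ β : ℝ, 0 < β ∧
    ∀ (v : X) (a t b : ℝ), a ≤ t → t ≤ b → Set.Icc a b ⊆ J →
      ‖v‖ ≤ L * ((h t / h a) ^ (-β) * ‖T a t v‖ + (h b / h t) ^ (-β) * ‖T b t v‖)

section

variable {E : Type*} [NormedAddCommGroup E] [NormedSpace ℝ E] {T : ℝ → ℝ → E →L[ℝ] E}

theorem IsInvertibleEvolutionFamily.apply_apply_eq {a₀ : EReal}
    (hT : IsInvertibleEvolutionFamily a₀ T) {t s : ℝ} (ht : a₀ < (t : EReal))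
    (hs : a₀ < (s : EReal)) (v : E) : T t s (T s t v) = v := by
  have hcomp : (T t s).comp (T s t) = T t t := hT.2.1 t s t ht hs ht
  rw [← ContinuousLinearMap.comp_apply, hcomp, hT.1 t ht, ContinuousLinearMap.id_apply]

namespace HDichotomyProjWith

variable {h : ℝ → ℝ} {J : Set ℝ} {P : ℝ → E →L[ℝ] E} {D lam : ℝ}

theorem apply_eq_comp_apply (hdich : HDichotomyProjWith h T J P D lam) {a t : ℝ}
    (ha : a ∈ J) (ht : t ∈ J) (hat : a ≤ t) (hinv : ∀ w, T t a (T a t w) = w) (v : E) :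
    P t v = ((T t a).comp (P a)) (T a t v) := by
  conv_lhs => rw [← hinv v]
  rw [← ContinuousLinearMap.comp_apply, hdich.2.1 t ht a ha hat]

theorem sub_apply_eq_comp_apply (hdich : HDichotomyProjWith h T J P D lam) {t b : ℝ}
    (ht : t ∈ J) (hb : b ∈ J) (htb : t ≤ b) (hinv : ∀ w, T t b (T b t w) = w) (v : E) :
    v - P t v = ((T t b).comp (ContinuousLinearMap.id ℝ E - P b)) (T b t v) := by
  have hcomm : P b (T b t v) = T b t (P t v) := by
    rw [← ContinuousLinearMap.comp_apply, hdich.2.1 b hb t ht htb,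
      ContinuousLinearMap.comp_apply]
  simp only [ContinuousLinearMap.comp_apply, sub_apply,
    ContinuousLinearMap.id_apply, hcomm, ← map_sub, hinv]

theorem norm_apply_le (hdich : HDichotomyProjWith h T J P D lam) {a t : ℝ}
    (ha : a ∈ J) (ht : t ∈ J) (hat : a ≤ t) (hinv : ∀ w, T t a (T a t w) = w) (v : E) :
    ‖P t v‖ ≤ D * (h t / h a) ^ (-lam) * ‖T a t v‖ := by
  rw [hdich.apply_eq_comp_apply ha ht hat hinv]
  exact (T t a).comp (P a) |>.le_of_opNorm_le (hdich.2.2.2.1 t ht a ha hat) _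

theorem norm_sub_apply_le (hdich : HDichotomyProjWith h T J P D lam) {t b : ℝ}
    (ht : t ∈ J) (hb : b ∈ J) (htb : t ≤ b) (hinv : ∀ w, T t b (T b t w) = w) (v : E) :
    ‖v - P t v‖ ≤ D * (h b / h t) ^ (-lam) * ‖T b t v‖ := by
  rw [hdich.sub_apply_eq_comp_apply ht hb htb hinv]
  exact (T t b).comp _ |>.le_of_opNorm_le (hdich.2.2.2.2 t ht b hb htb) _

theorem norm_le (hdich : HDichotomyProjWith h T J P D lam) {a t b : ℝ}
    (ha : a ∈ J) (ht : t ∈ J) (hb : b ∈ J) (hat : a ≤ t) (htb : t ≤ b)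
    (hinv : ∀ s ∈ J, ∀ w, T t s (T s t w) = w) (v : E) :
    ‖v‖ ≤ D * ((h t / h a) ^ (-lam) * ‖T a t v‖ + (h b / h t) ^ (-lam) * ‖T b t v‖) :=
  calc ‖v‖ = ‖P t v + (v - P t v)‖ := by rw [add_sub_cancel]
    _ ≤ ‖P t v‖ + ‖v - P t v‖ := norm_add_le _ _
    _ ≤ D * (h t / h a) ^ (-lam) * ‖T a t v‖ + D * (h b / h t) ^ (-lam) * ‖T b t v‖ :=
      add_le_add (hdich.norm_apply_le ha ht hat (hinv a ha) v)
        (hdich.norm_sub_apply_le ht hb htb (hinv b hb) v)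
    _ = D * ((h t / h a) ^ (-lam) * ‖T a t v‖ + (h b / h t) ^ (-lam) * ‖T b t v‖) := by
      ring

end HDichotomyProjWith

end

theorem hDichotomy_implies_hExpansive_general
    (a₀ : EReal) (T : ℝ → ℝ → X →L[ℝ] X) (h : ℝ → ℝ) (astar : ℝ)
    (P : ℝ → X →L[ℝ] X) (D lam : ℝ)
    (hT : IsInvertibleEvolutionFamily a₀ T)
    (hastar : a₀ < (astar : EReal))
    (hD : 0 < D) (hlam : 0 < lam)
    (hdich : HDichotomyProjWith h T (Set.Ici astar) P D lam) :
    HExpansiveOn h T (Set.Ici astar) ∧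
    ∀ (v : X) (a t b : ℝ), astar ≤ a → a ≤ t → t ≤ b →
      ‖v‖ ≤ D * ((h t / h a) ^ (-lam) * ‖T a t v‖ +
        (h b / h t) ^ (-lam) * ‖T b t v‖) := by
  have hpos : ∀ s : ℝ, astar ≤ s → a₀ < (s : EReal) := fun s hs =>
    hastar.trans_le (EReal.coe_le_coe_iff.mpr hs)
  have key : ∀ (v : X) (a t b : ℝ), astar ≤ a → a ≤ t → t ≤ b →
      ‖v‖ ≤ D * ((h t / h a) ^ (-lam) * ‖T a t v‖ + (h b / h t) ^ (-lam) * ‖T b t v‖) :=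
    fun v a t b ha hat htb =>
      have ht : astar ≤ t := ha.trans hat
      hdich.norm_le ha ht (ht.trans htb) hat htb
        (fun s hs => hT.apply_apply_eq (hpos t ht) (hpos s hs)) v
  exact ⟨⟨D, hD, lam, hlam, fun v a t b hat htb hsub =>
    key v a t b (hsub ⟨le_rfl, hat.trans htb⟩) hat htb⟩, key⟩

/-- If an invertible evolution family `T` admits an `h`-dichotomy on
`[a₀*, ∞)` with projections `P` and constants `D, lam > 0`, then `T` is `h`-expansive on
`[a₀*, ∞)`; in fact
`‖v‖ ≤ D ((h t / h a)^(-lam) ‖T a t v‖ + (h b / h t)^(-lam) ‖T b t v‖)` for every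
`v ∈ X` and all `a ≤ t ≤ b` with `[a, b] ⊆ [a₀*, ∞)`. -/
theorem hDichotomy_implies_hExpansive
    (a₀ : EReal) (T : ℝ → ℝ → X →L[ℝ] X) (h : ℝ → ℝ) (astar : ℝ)
    (P : ℝ → X →L[ℝ] X) (D lam : ℝ)
    (hT : IsInvertibleEvolutionFamily a₀ T)
    (hh : IsGrowthRate a₀ h)
    (hastar : a₀ < (astar : EReal))
    (hD : 0 < D) (hlam : 0 < lam)
    (hdich : HDichotomyProjWith h T (Set.Ici astar) P D lam) :
    HExpansiveOn h T (Set.Ici astar) ∧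
    ∀ (v : X) (a t b : ℝ), astar ≤ a → a ≤ t → t ≤ b →
      ‖v‖ ≤ D * ((h t / h a) ^ (-lam) * ‖T a t v‖ +
        (h b / h t) ^ (-lam) * ‖T b t v‖) :=
  hDichotomy_implies_hExpansive_general a₀ T h astar P D lam hT hastar hD hlam hdich
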